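/- The subspace of homogeneous polynomials of degree ≥ 3 in 2n variables (with the standard Poisson bracket) is a Lie subalgebra, and its derived subalgebra (the span of all brackets of its elements) is exactly the subspace of homogeneous polynomials of degree ≥ 4; hence its abelianization is isomorphic to S³H, the cubic polynomials. -/

import Mathlib

/-!
On monomials the bracket is `{X^A, X^B} = ∑ᵢ cᵢ X^(A + B - xᵢ - yᵢ)` with
`cᵢ = A(xᵢ) B(yᵢ) - A(yᵢ) B(xᵢ)`, so it maps degrees `≥ d` and `≥ e` to degree `≥ d + e - 2`;
with `d = e = 3` this gives closure and one inclusion for the derived algebra.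
Conversely, a monomial `X^m` of degree `≥ 4` is a nonzero multiple of a single bracket
`{X^(m + xᵢyᵢ - B), X^B}` with `B` cubic: take `B = xᵢ²yᵢ` or `xᵢyᵢ²` if `m` has degree `≥ 2` in
the pair `xᵢ, yᵢ`, and `B = u²w` for two variables `u, w` of `m` otherwise.
The abelianization is then the projection onto the cubic component.
-/

open MvPolynomial

/-- The standard Poisson bracket on polynomials in `2n` variables. -/
noncomputable def pb {n : ℕ} (f g : MvPolynomial (Fin n ⊕ Fin n) ℝ) :
    MvPolynomial (Fin n ⊕ Fin n) ℝ :=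
  ∑ i : Fin n,
    (pderiv (Sum.inl i) f * pderiv (Sum.inr i) g -
      pderiv (Sum.inr i) f * pderiv (Sum.inl i) g)

/-- The subspace `⊕_{k ≥ d} SᵏH` of polynomials all of whose homogeneous
components have degree at least `d`. -/
noncomputable def degGE (n d : ℕ) : Submodule ℝ (MvPolynomial (Fin n ⊕ Fin n) ℝ) :=
  ⨆ (k : ℕ) (_ : d ≤ k), homogeneousSubmodule (Fin n ⊕ Fin n) ℝ k

theorem Finsupp.degree_tsub_degree_le_degree_tsub {σ : Type*} (A B : σ →₀ ℕ) :
    A.degree - B.degree ≤ (A - B).degree := by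
  have := Finsupp.degree_mono (le_tsub_add : A ≤ A - B + B)
  rw [map_add] at this
  omega

namespace MvPolynomial

theorem iSup_homogeneousSubmodule_eq_supported (σ R : Type*) [CommSemiring R] (d : ℕ) :
    ⨆ (k : ℕ) (_ : d ≤ k), homogeneousSubmodule σ R k =
      AddMonoidAlgebra.supported R R {m : σ →₀ ℕ | d ≤ m.degree} := by
  apply le_antisymm
  · refine iSup₂_le fun k hk => ?_
    rw [homogeneousSubmodule_eq_finsupp_supported]
    exact AddMonoidAlgebra.supported_mono fun m (hm : m.degree = k) => hk.trans_eq hm.symm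
  · rw [AddMonoidAlgebra.supported_eq_span_single, Submodule.span_le]
    rintro _ ⟨m, hm, rfl⟩
    exact Submodule.mem_iSup_of_mem m.degree <| Submodule.mem_iSup_of_mem hm <|
      isHomogeneous_monomial _ rfl

theorem pderiv_monomial_mul_pderiv_monomial {σ R : Type*} [CommSemiring R] (A B : σ →₀ ℕ)
    (u v : σ) :
    pderiv u (monomial A (1 : R)) * pderiv v (monomial B 1) =
      monomial (A + B - Finsupp.single u 1 - Finsupp.single v 1) ((A u * B v : ℕ) : R) := by
  rw [pderiv_monomial, pderiv_monomial, monomial_mul]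
  rcases Nat.eq_zero_or_pos (A u) with hA | hA
  · simp [hA]
  rcases Nat.eq_zero_or_pos (B v) with hB | hB
  · simp [hB]
  have hexp : A - Finsupp.single u 1 + (B - Finsupp.single v 1) =
      A + B - Finsupp.single u 1 - Finsupp.single v 1 := by
    classical
    ext w
    simp only [Finsupp.add_apply, Finsupp.tsub_apply, Finsupp.single_apply]
    split_ifs <;> subst_vars <;> omega
  rw [hexp]
  push_cast
  ring_nf

end MvPolynomial

section PoissonBracket

variable {n : ℕ}

theorem mem_degGE {d : ℕ} {f : MvPolynomial (Fin n ⊕ Fin n) ℝ} :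
    f ∈ degGE n d ↔ ∀ m, coeff m f ≠ 0 → d ≤ m.degree := by
  rw [degGE, iSup_homogeneousSubmodule_eq_supported, AddMonoidAlgebra.mem_supported']
  exact forall_congr' fun m => not_imp_comm

theorem degGE_eq_span (n d : ℕ) :
    degGE n d = Submodule.span ℝ ((fun m => monomial m 1) '' {m | d ≤ m.degree}) := by
  rw [degGE, iSup_homogeneousSubmodule_eq_supported, AddMonoidAlgebra.supported_eq_span_single]
  rfl

theorem monomial_mem_degGE {d : ℕ} {m : Fin n ⊕ Fin n →₀ ℕ} (c : ℝ) (h : d ≤ m.degree) :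
    monomial m c ∈ degGE n d := by
  rw [← mul_one c, ← smul_eq_mul, ← smul_monomial, degGE_eq_span]
  exact Submodule.smul_mem _ _ (Submodule.subset_span ⟨m, h, rfl⟩)

theorem degGE_antitone (n : ℕ) : Antitone (degGE n) := fun _ _ h =>
  iSup_mono' fun k => ⟨k, iSup_mono' fun hk => ⟨h.trans hk, le_rfl⟩⟩

noncomputable def pbBilin (n : ℕ) :
    MvPolynomial (Fin n ⊕ Fin n) ℝ →ₗ[ℝ] MvPolynomial (Fin n ⊕ Fin n) ℝ →ₗ[ℝ]
      MvPolynomial (Fin n ⊕ Fin n) ℝ :=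
  ∑ i : Fin n,
    ((LinearMap.mul ℝ _).compl₁₂ (pderiv (.inl i)).toLinearMap (pderiv (.inr i)).toLinearMap -
      (LinearMap.mul ℝ _).compl₁₂ (pderiv (.inr i)).toLinearMap (pderiv (.inl i)).toLinearMap)

@[simp]
theorem pbBilin_apply (f g : MvPolynomial (Fin n ⊕ Fin n) ℝ) : pbBilin n f g = pb f g := by
  simp [pbBilin, pb, LinearMap.sum_apply]

def poissonCoeff (A B : Fin n ⊕ Fin n →₀ ℕ) (i : Fin n) : ℤ :=
  A (.inl i) * B (.inr i) - A (.inr i) * B (.inl i)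

theorem poissonCoeff_eq_zero_iff {A B : Fin n ⊕ Fin n →₀ ℕ} {i : Fin n} :
    poissonCoeff A B i = 0 ↔ A (.inl i) * B (.inr i) = A (.inr i) * B (.inl i) := by
  rw [poissonCoeff, sub_eq_zero]
  norm_cast

noncomputable def pairExp (i : Fin n) : Fin n ⊕ Fin n →₀ ℕ :=
  Finsupp.single (.inl i) 1 + Finsupp.single (.inr i) 1

theorem pb_monomial_monomial (A B : Fin n ⊕ Fin n →₀ ℕ) :
    pb (monomial A (1 : ℝ)) (monomial B 1) =
      ∑ i, monomial (A + B - pairExp i) (poissonCoeff A B i : ℝ) := by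
  refine Finset.sum_congr rfl fun i _ => ?_
  rw [pderiv_monomial_mul_pderiv_monomial, pderiv_monomial_mul_pderiv_monomial,
    tsub_right_comm (b := (Finsupp.single (.inr i) 1 : Fin n ⊕ Fin n →₀ ℕ)), ← map_sub,
    pairExp, ← tsub_tsub, poissonCoeff]
  push_cast
  rfl

theorem pb_monomial_monomial_of_poissonCoeff_eq_zero {A B : Fin n ⊕ Fin n →₀ ℕ} {i : Fin n}
    (h : ∀ j ≠ i, poissonCoeff A B j = 0) :
    pb (monomial A (1 : ℝ)) (monomial B 1) =
      monomial (A + B - pairExp i) (poissonCoeff A B i : ℝ) := by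
  rw [pb_monomial_monomial, Finset.sum_eq_single i (fun j _ hj => by simp [h j hj]) (by simp)]

/-- `X^m` is then a nonzero multiple of the single bracket `{X^(m + xᵢyᵢ - B), X^B}`. -/
def IsPoissonSplitting (m B : Fin n ⊕ Fin n →₀ ℕ) (i : Fin n) : Prop :=
  B ≤ m + pairExp i ∧ B.degree = 3 ∧ poissonCoeff (m + pairExp i - B) B i ≠ 0 ∧
    ∀ j ≠ i, poissonCoeff (m + pairExp i - B) B j = 0

theorem isPoissonSplitting_single_add_single {m : Fin n ⊕ Fin n →₀ ℕ} {i : Fin n} {a b : ℕ}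
    (hab : a + b = 3) (ha : a ≤ m (.inl i) + 1) (hb : b ≤ m (.inr i) + 1)
    (hc : (m (.inl i) + 1 - a) * b ≠ (m (.inr i) + 1 - b) * a) :
    IsPoissonSplitting m (Finsupp.single (.inl i) a + Finsupp.single (.inr i) b) i := by
  refine ⟨fun k => ?_, by simp [map_add, hab], fun h => hc ?_, fun j hj => ?_⟩
  · rcases k with k | k <;> by_cases hk : k = i <;> simp [pairExp, hk] <;> omega
  · simpa [poissonCoeff_eq_zero_iff, pairExp] using h
  · simp [poissonCoeff_eq_zero_iff, pairExp, hj]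

/-- The coefficients for `B = xᵢ²yᵢ` and `B = xᵢyᵢ²` are `m(xᵢ) - 1 - 2 m(yᵢ)` and
`2 m(xᵢ) + 1 - m(yᵢ)`, which cannot both vanish. -/
theorem exists_isPoissonSplitting_of_two_le {m : Fin n ⊕ Fin n →₀ ℕ} {i : Fin n}
    (hi : 2 ≤ m (.inl i) + m (.inr i)) : ∃ B, IsPoissonSplitting m B i := by
  by_cases hx : 1 ≤ m (.inl i) ∧ m (.inl i) ≠ 1 + 2 * m (.inr i)
  · exact ⟨_, isPoissonSplitting_single_add_single (a := 2) (b := 1) rfl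
      (by omega) (by omega) (by omega)⟩
  · exact ⟨_, isPoissonSplitting_single_add_single (a := 1) (b := 2) rfl
      (by omega) (by omega) (by omega)⟩

/-- Here `m` is squarefree without conjugate pairs; `B = u²w` for distinct variables `u, w`
dividing `m` works, since `m + pairExp i - B` vanishes on both variables of `w`'s index. -/
theorem exists_isPoissonSplitting_of_le_one {m : Fin n ⊕ Fin n →₀ ℕ}
    (h : ∀ i, m (.inl i) + m (.inr i) ≤ 1) (hm : 2 ≤ m.degree) :
    ∃ B i, IsPoissonSplitting m B i := by
  have hle : ∀ k, m k ≤ 1 := by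
    rintro (k | k) <;> have := h k <;> omega
  have hcard : 1 < m.support.card := by
    have := Finset.sum_le_card_nsmul m.support m 1 fun k _ => hle k
    rw [← Finsupp.degree_apply] at this
    simp only [smul_eq_mul, mul_one] at this
    omega
  obtain ⟨u, hu, w, hw, huw⟩ := Finset.one_lt_card.mp hcard
  rw [Finsupp.mem_support_iff] at hu hw
  refine ⟨Finsupp.single u 2 + Finsupp.single w 1, u.elim id id, fun t => ?_,
    by simp [map_add], ?_, fun j hj => ?_⟩
  · rcases u with i | i <;> rcases w with k | k <;> rcases t with t | t <;>
      have := h i <;> have := h k <;> have := h t <;>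
      simp [pairExp, Finsupp.single_apply] at huw ⊢ <;> split_ifs <;> subst_vars <;> omega
  · rcases u with i | i <;> rcases w with k | k <;> have := h i <;> have := h k <;>
      simp [poissonCoeff, pairExp, Finsupp.single_apply] at huw ⊢ <;>
      split_ifs <;> subst_vars <;> omega
  · rcases u with i | i <;> rcases w with k | k <;> have := h i <;> have := h k <;>
      simp [poissonCoeff, pairExp, Finsupp.single_apply] at huw hj ⊢ <;>
      split_ifs <;> subst_vars <;> omega

theorem exists_isPoissonSplitting {m : Fin n ⊕ Fin n →₀ ℕ} (hm : 2 ≤ m.degree) :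
    ∃ B i, IsPoissonSplitting m B i := by
  by_cases h : ∃ i, 2 ≤ m (.inl i) + m (.inr i)
  · obtain ⟨i, hi⟩ := h
    obtain ⟨B, hB⟩ := exists_isPoissonSplitting_of_two_le hi
    exact ⟨B, i, hB⟩
  · simp only [not_exists, not_le] at h
    exact exists_isPoissonSplitting_of_le_one (fun i => Nat.le_of_lt_succ (h i)) hm

theorem degree_pairExp (i : Fin n) : (pairExp i).degree = 2 := by
  simp [pairExp, map_add]

theorem pb_mem_degGE {d e : ℕ} {f g : MvPolynomial (Fin n ⊕ Fin n) ℝ} (hf : f ∈ degGE n d)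
    (hg : g ∈ degGE n e) : pb f g ∈ degGE n (d + e - 2) := by
  suffices Submodule.map₂ (pbBilin n) (degGE n d) (degGE n e) ≤ degGE n (d + e - 2) by
    simpa using this (Submodule.apply_mem_map₂ _ hf hg)
  rw [degGE_eq_span n d, degGE_eq_span n e, Submodule.map₂_span_span, Submodule.span_le]
  rintro _ ⟨_, ⟨A, hA, rfl⟩, _, ⟨B, hB, rfl⟩, rfl⟩
  simp only [SetLike.mem_coe, pbBilin_apply]
  rw [pb_monomial_monomial]
  refine Submodule.sum_mem _ fun i _ => monomial_mem_degGE _ ?_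
  have := Finsupp.degree_tsub_degree_le_degree_tsub (A + B) (pairExp i)
  rw [map_add, degree_pairExp] at this
  simp only [Set.mem_ofPred_eq] at hA hB
  omega

theorem monomial_mem_span_pb {m : Fin n ⊕ Fin n →₀ ℕ} (hm : 4 ≤ m.degree) :
    monomial m 1 ∈ Submodule.span ℝ
      {p | ∃ f ∈ degGE n 3, ∃ g ∈ degGE n 3, p = pb f g} := by
  obtain ⟨B, i, hle, hB, hc, hj⟩ := exists_isPoissonSplitting (m := m) (by omega)
  set A := m + pairExp i - B
  have hAB : A + B = m + pairExp i := tsub_add_cancel_of_le hle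
  have hA : A.degree + 3 = m.degree + 2 := by rw [← hB, ← map_add, hAB, map_add, degree_pairExp]
  have hpb : pb (monomial A 1) (monomial B 1) = (poissonCoeff A B i : ℝ) • monomial m 1 := by
    rw [pb_monomial_monomial_of_poissonCoeff_eq_zero hj, hAB, add_tsub_cancel_right,
      smul_monomial, smul_eq_mul, mul_one]
  rw [← inv_smul_smul₀ (Int.cast_ne_zero.mpr hc : (poissonCoeff A B i : ℝ) ≠ 0) (monomial m 1),
    ← hpb]
  exact Submodule.smul_mem _ _ <| Submodule.subset_span
    ⟨_, monomial_mem_degGE 1 (by omega), _, monomial_mem_degGE 1 hB.ge, rfl⟩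

theorem homogeneousComponent_eq_zero_iff_mem_degGE {d : ℕ} {f : MvPolynomial (Fin n ⊕ Fin n) ℝ}
    (hf : f ∈ degGE n d) : homogeneousComponent d f = 0 ↔ f ∈ degGE n (d + 1) := by
  rw [mem_degGE] at hf ⊢
  simp only [MvPolynomial.ext_iff, coeff_homogeneousComponent, coeff_zero, ite_eq_right_iff]
  exact ⟨fun h m hm => (hf m hm).lt_of_ne fun hd => hm (h m hd.symm),
    fun h m hd => by_contra fun hm => by have := h m hm; omega⟩

noncomputable def degGEToHomogeneous (n d : ℕ) :
    degGE n d →ₗ[ℝ] homogeneousSubmodule (Fin n ⊕ Fin n) ℝ d :=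
  ((homogeneousComponent d).comp (degGE n d).subtype).codRestrict _
    fun _ => homogeneousComponent_mem d _

theorem ker_degGEToHomogeneous (n d : ℕ) :
    LinearMap.ker (degGEToHomogeneous n d) = (degGE n (d + 1)).comap (degGE n d).subtype := by
  ext f
  rw [LinearMap.mem_ker, Submodule.mem_comap, Submodule.subtype_apply,
    ← homogeneousComponent_eq_zero_iff_mem_degGE f.2, ← Submodule.coe_eq_zero]
  rfl

theorem degGEToHomogeneous_surjective (n d : ℕ) : Function.Surjective (degGEToHomogeneous n d) :=
  fun p => ⟨⟨p, Submodule.mem_iSup_of_mem d (Submodule.mem_iSup_of_mem le_rfl p.2)⟩,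
    Subtype.ext <| by simp [degGEToHomogeneous, homogeneousComponent_of_mem p.2]⟩

noncomputable def degGEQuotEquiv (n d : ℕ) :
    (degGE n d ⧸ (degGE n (d + 1)).comap (degGE n d).subtype) ≃ₗ[ℝ]
      homogeneousSubmodule (Fin n ⊕ Fin n) ℝ d :=
  (Submodule.quotEquivOfEq _ _ (ker_degGEToHomogeneous n d).symm).trans
    ((degGEToHomogeneous n d).quotKerEquivOfSurjective (degGEToHomogeneous_surjective n d))

end PoissonBracket

/-- The polynomials of degree ≥ 3 form a Lie subalgebra under the Poisson bracket,
its derived subalgebra is exactly the subspace of polynomials of degree ≥ 4, and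
hence its abelianization is isomorphic to `S³H`. -/
theorem ham1_derived_and_abelianization (n : ℕ) :
    (∀ f ∈ degGE n 3, ∀ g ∈ degGE n 3, pb f g ∈ degGE n 3) ∧
    (Submodule.span ℝ
        {p : MvPolynomial (Fin n ⊕ Fin n) ℝ |
          ∃ f ∈ degGE n 3, ∃ g ∈ degGE n 3, p = pb f g} = degGE n 4) ∧
    Nonempty
      ((↥(degGE n 3) ⧸ (Submodule.comap (degGE n 3).subtype (degGE n 4)))
        ≃ₗ[ℝ] ↥(homogeneousSubmodule (Fin n ⊕ Fin n) ℝ 3)) := by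
  have hpb : ∀ f ∈ degGE n 3, ∀ g ∈ degGE n 3, pb f g ∈ degGE n 4 := fun f hf g hg => by
    simpa using pb_mem_degGE hf hg
  refine ⟨fun f hf g hg => degGE_antitone n (by norm_num) (hpb f hf g hg), ?_,
    ⟨degGEQuotEquiv n 3⟩⟩
  apply le_antisymm
  · rw [Submodule.span_le]
    rintro _ ⟨f, hf, g, hg, rfl⟩
    exact hpb f hf g hg
  · rw [degGE_eq_span, Submodule.span_le]
    rintro _ ⟨m, hm, rfl⟩
    exact monomial_mem_span_pb hm
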